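/- arXiv:2212.01788 — 2 statements merged into one kernel-verified Lean document; each statement's English description precedes it below -/
import Mathlib

section
/- Let n ≥ 1 and let A be a real n×n matrix satisfying the cyclic non-increasing condition such that Ae < 0 (all row sums strictly negative). Then (i) every vector z ∈ ℝⁿ with Az = 0 satisfies eᵀz = 0, and (ii) the system Aᵀx = e has a solution x with x ≤ 0 componentwise. -/
/-!
Put `D i j = A i (j - 1) - A i j`. The cyclic condition makes `D` nonnegative off the diagonal,
and its rows sum to zero, so (Gordan's alternative) some probability vector `y` has `yᵀ D = 0`.
This says that `yᵀ A` is invariant under the cyclic shift, hence constant, equal to some `c` with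
`n c = yᵀ A e < 0`. Then `x = y / c ≤ 0` solves `Aᵀ x = e`, and `A z = 0` gives `eᵀ z = xᵀ A z = 0`.
-/

open Matrix BigOperators

/-- The cyclic non-increasing condition: each row of `A` weakly decreases
cyclically starting from the diagonal, i.e. `a_{i[j-1]} ≥ a_{ij}` for all
`j ≠ i` (indices in `Fin n`, arithmetic mod `n`). -/
def CyclicNonIncr {n : ℕ} [NeZero n] (A : Matrix (Fin n) (Fin n) ℝ) : Prop :=
  ∀ i j : Fin n, j ≠ i → A i (j - 1) ≥ A i j

/-- The directed graph `𝒢(A)` has an edge from `i` to `j` iff `a_{i[j-1]} > a_{ij}`. -/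
def GraphEdge {n : ℕ} [NeZero n] (A : Matrix (Fin n) (Fin n) ℝ) (i j : Fin n) : Prop :=
  A i (j - 1) > A i j

/-- `i` and `j` are strongly connected in `𝒢(A)`: there are directed paths
(possibly of length 0) from `i` to `j` and from `j` to `i`. -/
def Conn {n : ℕ} [NeZero n] (A : Matrix (Fin n) (Fin n) ℝ) (i j : Fin n) : Prop :=
  Relation.ReflTransGen (GraphEdge A) i j ∧ Relation.ReflTransGen (GraphEdge A) j i

/-- `C` is a strongly connected component of `𝒢(A)`: an equivalence class of
the strong-connectivity relation. -/
def IsSCC {n : ℕ} [NeZero n] (A : Matrix (Fin n) (Fin n) ℝ) (C : Set (Fin n)) : Prop :=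
  ∃ i, C = {j | Conn A i j}

/-- `C` is a closed SCC of `𝒢(A)`: an SCC with no edge leaving it. -/
def IsClosedSCC {n : ℕ} [NeZero n] (A : Matrix (Fin n) (Fin n) ℝ) (C : Set (Fin n)) : Prop :=
  IsSCC A C ∧ ∀ i ∈ C, ∀ j, GraphEdge A i j → j ∈ C

/-- `C` is an open SCC of `𝒢(A)`: an SCC with some edge leaving it. -/
def IsOpenSCC {n : ℕ} [NeZero n] (A : Matrix (Fin n) (Fin n) ℝ) (C : Set (Fin n)) : Prop :=
  IsSCC A C ∧ ¬ (∀ i ∈ C, ∀ j, GraphEdge A i j → j ∈ C)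

section Metzler

variable {ι : Type*} [Fintype ι] (M : Matrix ι ι ℝ)

theorem exists_mulVec_apply_nonneg (hoff : ∀ i j, i ≠ j → 0 ≤ M i j) (hrow : ∀ i, ∑ j, M i j = 0)
    [Nonempty ι] (x : ι → ℝ) : ∃ i, 0 ≤ (M *ᵥ x) i := by
  obtain ⟨i, hi⟩ := Finite.exists_min x
  refine ⟨i, ?_⟩
  have hshift : (M *ᵥ x) i = ∑ j, M i j * (x j - x i) := by
    simp only [mulVec, dotProduct, mul_sub, Finset.sum_sub_distrib, ← Finset.sum_mul, hrow,
      zero_mul, sub_zero]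
  rw [hshift]
  refine Finset.sum_nonneg fun j _ => ?_
  obtain rfl | hij := eq_or_ne i j
  · simp
  · exact mul_nonneg (hoff i j hij) (sub_nonneg.2 (hi j))

theorem exists_mem_stdSimplex_vecMul_eq_zero (hoff : ∀ i j, i ≠ j → 0 ≤ M i j)
    (hrow : ∀ i, ∑ j, M i j = 0) [Nonempty ι] : ∃ y ∈ stdSimplex ℝ ι, y ᵥ* M = 0 := by
  classical
  -- A functional separating `0` from `yᵀ M` (`y` in the simplex) is some `x` with `M x < 0`.
  by_contra h0
  have hK : IsClosed (vecMulLinear M '' stdSimplex ℝ ι) :=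
    ((isCompact_stdSimplex ℝ ι).image (vecMulLinear M).continuous_of_finiteDimensional).isClosed
  obtain ⟨f, u, hfK, hu⟩ := geometric_hahn_banach_closed_point
    ((convex_stdSimplex ℝ ι).linear_image (vecMulLinear M)) hK (x := 0)
    fun ⟨y, hy, hyM⟩ => h0 ⟨y, hy, hyM⟩
  set x : ι → ℝ := fun j => f (Pi.single j 1)
  have hf : ∀ w, f w = w ⬝ᵥ x := fun w => by
    have hsingle (k : ι) : (fun j => if k = j then (1 : ℝ) else 0) = Pi.single k 1 := by
      ext j; simp [Pi.single_apply, eq_comm]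
    simpa [dotProduct, x, hsingle] using f.toLinearMap.pi_apply_eq_sum_univ w
  obtain ⟨i, hi⟩ := exists_mulVec_apply_nonneg M hoff hrow x
  have hlt := hfK _ ⟨Pi.single i 1, single_mem_stdSimplex ℝ i, rfl⟩
  rw [map_zero] at hu
  rw [vecMulLinear_apply, hf, ← dotProduct_mulVec, single_one_dotProduct] at hlt
  linarith

end Metzler

theorem dotProduct_neg_of_mem_stdSimplex {ι : Type*} [Fintype ι] {y w : ι → ℝ}
    (hy : y ∈ stdSimplex ℝ ι) (hw : ∀ i, w i < 0) : y ⬝ᵥ w < 0 := by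
  obtain ⟨i, hi⟩ : ∃ i, 0 < y i := by
    by_contra! h
    have : ∑ i, y i = 0 := Finset.sum_eq_zero fun i _ => le_antisymm (h i) (hy.1 i)
    simp [hy.2] at this
  calc y ⬝ᵥ w < ∑ _ : ι, (0 : ℝ) :=
        Finset.sum_lt_sum (fun j _ => mul_nonpos_of_nonneg_of_nonpos (hy.1 j) (hw j).le)
          ⟨i, Finset.mem_univ i, mul_neg_of_pos_of_neg hi (hw i)⟩
    _ = 0 := Finset.sum_const_zero

theorem Fin.apply_eq_apply_zero_of_apply_sub_one {n : ℕ} [NeZero n] {α : Type*} {v : Fin n → α}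
    (hv : ∀ j, v (j - 1) = v j) (j : Fin n) : v j = v 0 := by
  open Fin.NatCast in
  have hnat (m : ℕ) : v m = v 0 := by
    induction m with
    | zero => simp
    | succ m ih => rw [← ih, ← hv, Nat.cast_succ, add_sub_cancel_right]
  simpa using hnat j

section Cyclic

variable {n : ℕ} [NeZero n] (A : Matrix (Fin n) (Fin n) ℝ)

def cyclicDiff : Matrix (Fin n) (Fin n) ℝ :=
  of fun i j => A i (j - 1) - A i j

theorem CyclicNonIncr.cyclicDiff_nonneg {A : Matrix (Fin n) (Fin n) ℝ} (hA : CyclicNonIncr A)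
    (i j : Fin n) (hij : i ≠ j) : 0 ≤ cyclicDiff A i j :=
  sub_nonneg.2 (hA i j hij.symm)

theorem sum_cyclicDiff (i : Fin n) : ∑ j, cyclicDiff A i j = 0 := by
  simp only [cyclicDiff, of_apply, Finset.sum_sub_distrib]
  exact sub_eq_zero.2 ((Equiv.subRight 1).sum_comp (A i))

theorem vecMul_cyclicDiff (y : Fin n → ℝ) (j : Fin n) :
    (y ᵥ* cyclicDiff A) j = (y ᵥ* A) (j - 1) - (y ᵥ* A) j := by
  simp only [vecMul, dotProduct, cyclicDiff, of_apply, mul_sub, Finset.sum_sub_distrib]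

theorem vecMul_eq_of_vecMul_cyclicDiff_eq_zero {y : Fin n → ℝ} (hy : y ᵥ* cyclicDiff A = 0)
    (j : Fin n) : (y ᵥ* A) j = (y ᵥ* A) 0 :=
  Fin.apply_eq_apply_zero_of_apply_sub_one (fun j => by
    simpa [vecMul_cyclicDiff, sub_eq_zero] using congrFun hy j) j

end Cyclic

theorem stmt_6_general (n : ℕ) [NeZero n] (A : Matrix (Fin n) (Fin n) ℝ)
    (hA : CyclicNonIncr A)
    (hrow : ∀ i, A.mulVec (fun _ => (1 : ℝ)) i < 0) :
    (∀ z : Fin n → ℝ, A.mulVec z = 0 → ∑ i, z i = 0) ∧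
    ∃ x : Fin n → ℝ, x ≤ 0 ∧ Aᵀ.mulVec x = fun _ => (1 : ℝ) := by
  obtain ⟨y, hy, hyA⟩ := exists_mem_stdSimplex_vecMul_eq_zero (cyclicDiff A)
    hA.cyclicDiff_nonneg (sum_cyclicDiff A)
  set c := (y ᵥ* A) 0
  have hconst : y ᵥ* A = fun _ => c := funext (vecMul_eq_of_vecMul_cyclicDiff_eq_zero A hyA)
  have hc : c < 0 := by
    have hsum : (n : ℝ) * c = y ⬝ᵥ (A *ᵥ fun _ => 1) := by
      rw [dotProduct_mulVec, hconst]; simp [dotProduct]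
    have hn : (0 : ℝ) < n := by exact_mod_cast Nat.pos_of_neZero n
    nlinarith [dotProduct_neg_of_mem_stdSimplex hy hrow]
  have hx : Aᵀ *ᵥ (c⁻¹ • y) = fun _ => 1 := by
    rw [mulVec_transpose, smul_vecMul, hconst]
    ext; simp [hc.ne]
  refine ⟨fun z hz => ?_, c⁻¹ • y, fun i => ?_, hx⟩
  · calc ∑ i, z i = (Aᵀ *ᵥ (c⁻¹ • y)) ⬝ᵥ z := by simp [hx, dotProduct]
      _ = 0 := by rw [mulVec_transpose, ← dotProduct_mulVec, hz, dotProduct_zero]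
  · exact smul_nonpos_of_nonpos_of_nonneg (inv_nonpos.2 hc.le) (hy.1 i)

theorem stmt_6 (n : ℕ) [NeZero n] (hn : 1 ≤ n) (A : Matrix (Fin n) (Fin n) ℝ)
    (hA : CyclicNonIncr A)
    (hrow : ∀ i, A.mulVec (fun _ => (1 : ℝ)) i < 0) :
    (∀ z : Fin n → ℝ, A.mulVec z = 0 → ∑ i, z i = 0) ∧
    ∃ x : Fin n → ℝ, x ≤ 0 ∧ Aᵀ.mulVec x = fun _ => (1 : ℝ) :=
  stmt_6_general n A hA hrow
end

section
/- Let n ≥ 1 and let A be a real n×n matrix satisfying the cyclic non-increasing condition, such that the graph 𝒢(A) has exactly one closed strongly connected component and the system Aᵀx = e has a solution x. Then either x ≥ 0 componentwise and det A > 0, or x ≤ 0 componentwise and det A < 0. -/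
open Matrix BigOperators

/-! Let `D i` be the determinant of `A` with row `i` replaced by `e`; Cramer's rule gives
`det A * x i = D i`. If that matrix kills `v`, then `∑ v = 0`, so `v = w (· + 1) - w`, and summation
by parts turns the other rows into `∑ⱼ (a_{k[j-1]} - a_{kj}) w j = 0` for `k ≠ i`: away from `i`,
`w` is harmonic for the nonnegative weights whose support is `𝒢(A)`. By the maximum principle the
level set of `max w` is closed under edges unless it contains `i`; a closed set of vertices contains
a closed SCC, so if `i` lies in every closed SCC then `w` attains its maximum and its minimum at `i`,
`w` is constant and `v = 0`. Hence `D i ≠ 0` for `i` in the closed SCC.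

Along `(1 - t) • 1 + t • A`, `0 ≤ t < 1`, the graph contains the cycle `k → k + 1`, so every vertex
lies in every closed SCC and `D i` never vanishes; it is `1` at `t = 0`, so `D i ≥ 0` at `t = 1`.
Together, `det A ≠ 0` and every `det A * x j ≥ 0`, which gives the two sign patterns. -/

open Finset

theorem Fin.exists_eq_add_one_sub {G : Type*} [AddCommGroup G] {n : ℕ} [NeZero n]
    (v : Fin n → G) (hv : ∑ j, v j = 0) : ∃ w : Fin n → G, ∀ j, v j = w (j + 1) - w j := by
  obtain ⟨m, rfl⟩ := Nat.exists_eq_succ_of_ne_zero (NeZero.ne n)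
  refine ⟨fun j => ∑ l ∈ Iio j, v l, fun j => eq_sub_of_add_eq' ?_⟩
  dsimp only
  rcases eq_or_ne j (Fin.last m) with rfl | hj
  · rw [Fin.last_add_one, add_comm, ← sum_insert notMem_Iio_self, Iio_insert, ← Fin.top_eq_last,
      Iic_top, hv, ← bot_eq_zero (α := Fin (m + 1)), Iio_bot, sum_empty]
  · have : Iio (j + 1) = insert j (Iio j) := by
      ext l
      simp only [mem_Iio, mem_insert, Fin.lt_def, Fin.ext_iff, Fin.val_add_one, hj,
        if_false]
      omega
    rw [this, sum_insert notMem_Iio_self, add_comm]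

theorem Fin.sum_mul_add_one_sub {R : Type*} [CommRing R] {n : ℕ} [NeZero n] (f w : Fin n → R) :
    ∑ j, f j * (w (j + 1) - w j) = ∑ j, (f (j - 1) - f j) * w j := by
  have : ∑ j, f j * w (j + 1) = ∑ j, f (j - 1) * w j :=
    Fintype.sum_equiv (Equiv.addRight 1) _ _ (by simp)
  simp only [mul_sub, sub_mul, sum_sub_distrib, this]

theorem Fin.sum_sub_one_sub {R : Type*} [AddCommGroup R] {n : ℕ} [NeZero n] (f : Fin n → R) :
    ∑ j, (f (j - 1) - f j) = 0 := by
  rw [sum_sub_distrib, sub_eq_zero]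
  exact Fintype.sum_equiv (Equiv.subRight 1) _ _ (by simp)

theorem eq_of_sum_mul_eq_zero_of_forall_le {ι 𝕜 : Type*} [Fintype ι] [Field 𝕜] [LinearOrder 𝕜]
    [IsStrictOrderedRing 𝕜] {q w : ι → 𝕜} {k : ι} (hq : ∀ j ≠ k, 0 ≤ q j)
    (hq_sum : ∑ j, q j = 0) (hw : ∑ j, q j * w j = 0) (hmax : ∀ j, w j ≤ w k) {j : ι}
    (hj : 0 < q j) : w j = w k := by
  have hzero : ∑ l, q l * (w l - w k) = 0 := by
    simp only [mul_sub, sum_sub_distrib, ← sum_mul, hw, hq_sum, zero_mul, sub_zero]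
  have hnonpos : ∀ l ∈ univ, q l * (w l - w k) ≤ 0 := fun l _ => by
    rcases eq_or_ne l k with rfl | hl
    · simp
    · exact mul_nonpos_of_nonneg_of_nonpos (hq l hl) (sub_nonpos.mpr (hmax l))
  have := (sum_eq_zero_iff_of_nonpos hnonpos).mp hzero j (mem_univ j)
  exact sub_eq_zero.mp ((mul_eq_zero.mp this).resolve_left hj.ne')

theorem Relation.exists_mem_forall_reflTransGen_imp {α : Type*} [Finite α] {r : α → α → Prop}
    {S : Set α} (hS : S.Nonempty) (hcl : ∀ a ∈ S, ∀ b, r a b → b ∈ S) :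
    ∃ u ∈ S, ∀ b, ReflTransGen r u b → b ∈ S ∧ ReflTransGen r b u := by
  have hclosed : ∀ a ∈ S, ∀ b, ReflTransGen r a b → b ∈ S := fun a ha b hab => by
    induction hab with
    | refl => exact ha
    | tail _ hbc ih => exact hcl _ ih _ hbc
  obtain ⟨u, huS, hmin⟩ := S.toFinite.exists_minimalFor (fun a => {b | ReflTransGen r a b}) S hS
  refine ⟨u, huS, fun b hub => ⟨hclosed u huS b hub, ?_⟩⟩
  exact hmin (hclosed u huS b hub) (fun c hbc => hub.trans hbc) ReflTransGen.refl

theorem Matrix.det_mul_eq_det_updateRow {ι R : Type*} [Fintype ι] [DecidableEq ι] [CommRing R]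
    {A : Matrix ι ι R} {x b : ι → R} (hx : Aᵀ *ᵥ x = b) (i : ι) :
    A.det * x i = (A.updateRow i b).det := by
  rw [← Matrix.cramer_transpose_apply, Matrix.cramer_eq_adjugate_mulVec, ← hx,
    Matrix.mulVec_mulVec, Matrix.adjugate_mul, Matrix.det_transpose, Matrix.smul_mulVec,
    Matrix.one_mulVec, Pi.smul_apply, smul_eq_mul]

theorem nonneg_of_ne_zero_on_Ico {f : ℝ → ℝ} {a b : ℝ} (hab : a < b) (hf : Continuous f)
    (ha : 0 < f a) (hne : ∀ t ∈ Set.Ico a b, f t ≠ 0) : 0 ≤ f b := by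
  have hpos : ∀ t ∈ Set.Ico a b, 0 < f t := fun t ht => by
    by_contra! hle
    obtain ⟨s, hs, hfs⟩ := isPreconnected_Ico.intermediate_value ht (Set.left_mem_Ico.2 hab)
      hf.continuousOn ⟨hle, ha.le⟩
    exact hne s hs hfs
  exact ge_of_tendsto (hf.continuousAt.tendsto.mono_left nhdsWithin_le_nhds)
    (Filter.mem_of_superset (Ico_mem_nhdsLT hab) fun t ht => (hpos t ht).le)

section CyclicNonIncr

variable {n : ℕ} [NeZero n] {A : Matrix (Fin n) (Fin n) ℝ}

theorem CyclicNonIncr.add {B : Matrix (Fin n) (Fin n) ℝ} (hA : CyclicNonIncr A)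
    (hB : CyclicNonIncr B) : CyclicNonIncr (A + B) :=
  fun i j hij => add_le_add (hA i j hij) (hB i j hij)

theorem CyclicNonIncr.smul (hA : CyclicNonIncr A) {c : ℝ} (hc : 0 ≤ c) :
    CyclicNonIncr (c • A) :=
  fun i j hij => mul_le_mul_of_nonneg_left (hA i j hij) hc

theorem cyclicNonIncr_one : CyclicNonIncr (1 : Matrix (Fin n) (Fin n) ℝ) := fun i j hij => by
  rw [Matrix.one_apply_ne' hij]
  exact Matrix.zero_le_one_elem i (j - 1)

theorem GraphEdge.add_of_le {B : Matrix (Fin n) (Fin n) ℝ} {i j : Fin n} (hA : GraphEdge A i j)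
    (hB : B i j ≤ B i (j - 1)) : GraphEdge (A + B) i j :=
  add_lt_add_of_lt_of_le hA hB

theorem eq_of_graphEdge_of_forall_le {w : Fin n → ℝ} (hA : CyclicNonIncr A)
    {k : Fin n} (hk : ∑ j, (A k (j - 1) - A k j) * w j = 0) (hmax : ∀ j, w j ≤ w k) {j : Fin n}
    (hkj : GraphEdge A k j) : w j = w k :=
  eq_of_sum_mul_eq_zero_of_forall_le (fun j hj => sub_nonneg.mpr (hA k j hj))
    (Fin.sum_sub_one_sub _) hk hmax (sub_pos.mpr hkj)

theorem exists_isClosedSCC_subset {S : Set (Fin n)} (hS : S.Nonempty)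
    (hcl : ∀ i ∈ S, ∀ j, GraphEdge A i j → j ∈ S) : ∃ C, IsClosedSCC A C ∧ C ⊆ S := by
  obtain ⟨u, -, hu⟩ := Relation.exists_mem_forall_reflTransGen_imp hS hcl
  refine ⟨{j | Conn A u j}, ⟨⟨u, rfl⟩, fun i hi j hij => ?_⟩, fun j hj => (hu j hj.1).1⟩
  have huj := hi.1.tail hij
  exact ⟨huj, (hu j huj).2⟩

theorem forall_le_of_mem_isClosedSCC (hA : CyclicNonIncr A) {i : Fin n}
    (hi : ∀ C, IsClosedSCC A C → i ∈ C) {w : Fin n → ℝ}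
    (hw : ∀ k ≠ i, ∑ j, (A k (j - 1) - A k j) * w j = 0) : ∀ j, w j ≤ w i := by
  obtain ⟨k, hk⟩ := Finite.exists_max w
  by_contra! h
  have hik : w i ≠ w k := (h.choose_spec.trans_le (hk _)).ne
  have hcl : ∀ a ∈ {j | w j = w k}, ∀ b, GraphEdge A a b → b ∈ {j | w j = w k} :=
    fun a ha b hab => by
      have hai : a ≠ i := by rintro rfl; exact hik ha
      exact (eq_of_graphEdge_of_forall_le hA (hw a hai) (fun j => ha ▸ hk j) hab).trans ha
  obtain ⟨C, hC, hCS⟩ := exists_isClosedSCC_subset (S := {j | w j = w k}) ⟨k, rfl⟩ hcl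
  exact hik (hCS (hi C hC))

theorem eq_zero_of_mulVec_eq_zero_of_mem_isClosedSCC (hA : CyclicNonIncr A) {i : Fin n}
    (hi : ∀ C, IsClosedSCC A C → i ∈ C) {v : Fin n → ℝ} (hv : ∑ j, v j = 0)
    (hAv : ∀ k ≠ i, (A *ᵥ v) k = 0) : v = 0 := by
  obtain ⟨w, hvw⟩ := Fin.exists_eq_add_one_sub v hv
  have hw : ∀ k ≠ i, ∑ j, (A k (j - 1) - A k j) * w j = 0 := fun k hk => by
    rw [← Fin.sum_mul_add_one_sub, ← hAv k hk]
    simp only [Matrix.mulVec, dotProduct, hvw]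
  have hmax := forall_le_of_mem_isClosedSCC hA hi hw
  have hmin := forall_le_of_mem_isClosedSCC hA hi (w := -w) fun k hk => by
    simp only [Pi.neg_apply, mul_neg, sum_neg_distrib, hw k hk, neg_zero]
  funext j
  simp only [Pi.neg_apply, neg_le_neg_iff] at hmin
  rw [hvw, Pi.zero_apply, sub_eq_zero]
  linarith [hmax j, hmax (j + 1), hmin j, hmin (j + 1)]

theorem det_updateRow_ones_ne_zero (hA : CyclicNonIncr A) {i : Fin n}
    (hi : ∀ C, IsClosedSCC A C → i ∈ C) : (A.updateRow i fun _ => 1).det ≠ 0 := by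
  intro h
  obtain ⟨v, hv0, hv⟩ := Matrix.exists_mulVec_eq_zero_iff.mpr h
  refine hv0 (eq_zero_of_mulVec_eq_zero_of_mem_isClosedSCC hA hi ?_ fun k hk => ?_)
  · simpa [Matrix.mulVec, dotProduct] using congrFun hv i
  · simpa [Matrix.mulVec, Matrix.updateRow_ne hk] using congrFun hv k

open Fin.NatCast in
theorem reflTransGen_graphEdge_of_forall_add_one
    (h : ∀ k : Fin n, k + 1 ≠ k → GraphEdge A k (k + 1)) (i j : Fin n) :
    Relation.ReflTransGen (GraphEdge A) i j := by
  have key : ∀ m : ℕ, Relation.ReflTransGen (GraphEdge A) i (i + m) := fun m => by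
    induction m with
    | zero => simpa using .refl
    | succ m ih =>
      rw [Nat.cast_succ, ← add_assoc]
      by_cases hm : i + m + 1 = i + m
      · rwa [hm]
      · exact ih.tail (h _ hm)
  simpa using key (j - i).val

theorem IsSCC.nonempty {C : Set (Fin n)} (hC : IsSCC A C) : C.Nonempty := by
  obtain ⟨r, rfl⟩ := hC
  exact ⟨r, .refl, .refl⟩

theorem IsSCC.mem_of_forall_reflTransGen {C : Set (Fin n)} (hC : IsSCC A C)
    (h : ∀ i j, Relation.ReflTransGen (GraphEdge A) i j) (i : Fin n) : i ∈ C := by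
  obtain ⟨r, rfl⟩ := hC
  exact ⟨h r i, h i r⟩

theorem graphEdge_sub_smul_one_add_smul (hA : CyclicNonIncr A) {t : ℝ} (ht : t ∈ Set.Ico 0 1)
    {k : Fin n} (hk : k + 1 ≠ k) : GraphEdge ((1 - t) • 1 + t • A) k (k + 1) := by
  refine GraphEdge.add_of_le ?_ ?_ <;>
    simp only [GraphEdge, add_sub_cancel_right, Matrix.smul_apply, Matrix.one_apply_eq,
      Matrix.one_apply_ne' hk, smul_eq_mul]
  · linarith [ht.2]
  · simpa using mul_le_mul_of_nonneg_left (hA k (k + 1) hk) ht.1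

theorem det_updateRow_ones_nonneg (hA : CyclicNonIncr A) (i : Fin n) :
    0 ≤ (A.updateRow i fun _ => 1).det := by
  have hne : ∀ t ∈ Set.Ico (0 : ℝ) 1,
      (((1 - t) • 1 + t • A).updateRow i fun _ => 1).det ≠ 0 := fun t ht =>
    det_updateRow_ones_ne_zero ((cyclicNonIncr_one.smul (by linarith [ht.2])).add (hA.smul ht.1))
      fun C hC => hC.1.mem_of_forall_reflTransGen
        (reflTransGen_graphEdge_of_forall_add_one fun k hk =>
          graphEdge_sub_smul_one_add_smul hA ht hk) i
  have hI : ((1 : Matrix (Fin n) (Fin n) ℝ).updateRow i fun _ => 1).det = 1 := by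
    simpa using (Matrix.det_mul_eq_det_updateRow (A := (1 : Matrix (Fin n) (Fin n) ℝ))
      (x := fun _ => 1) (by simp) i).symm
  simpa using nonneg_of_ne_zero_on_Ico zero_lt_one (by fun_prop) (by simp [hI]) hne

end CyclicNonIncr

theorem stmt_9_general (n : ℕ) [NeZero n] (A : Matrix (Fin n) (Fin n) ℝ)
    (hA : CyclicNonIncr A)
    (hone : ∃ C : Set (Fin n), IsClosedSCC A C ∧
      ∀ C' : Set (Fin n), IsClosedSCC A C' → C' = C)
    (x : Fin n → ℝ) (hx : Aᵀ.mulVec x = fun _ => (1 : ℝ)) :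
    (0 ≤ x ∧ 0 < A.det) ∨ (x ≤ 0 ∧ A.det < 0) := by
  obtain ⟨C, hC, huniq⟩ := hone
  obtain ⟨i, hi⟩ := hC.1.nonempty
  have hD : ∀ j, 0 ≤ A.det * x j := fun j =>
    (Matrix.det_mul_eq_det_updateRow hx j).symm ▸ det_updateRow_ones_nonneg hA j
  have hDi : A.det * x i ≠ 0 := (Matrix.det_mul_eq_det_updateRow hx i).symm ▸
    det_updateRow_ones_ne_zero hA fun C' hC' => huniq C' hC' ▸ hi
  rcases (left_ne_zero_of_mul hDi).lt_or_gt with hneg | hpos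
  · exact .inr ⟨fun j => nonpos_of_mul_nonneg_right (hD j) hneg, hneg⟩
  · exact .inl ⟨fun j => nonneg_of_mul_nonneg_right (hD j) hpos, hpos⟩

theorem stmt_9 (n : ℕ) [NeZero n] (hn : 1 ≤ n) (A : Matrix (Fin n) (Fin n) ℝ)
    (hA : CyclicNonIncr A)
    (hone : ∃ C : Set (Fin n), IsClosedSCC A C ∧
      ∀ C' : Set (Fin n), IsClosedSCC A C' → C' = C)
    (x : Fin n → ℝ) (hx : Aᵀ.mulVec x = fun _ => (1 : ℝ)) :
    (0 ≤ x ∧ 0 < A.det) ∨ (x ≤ 0 ∧ A.det < 0) :=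
  stmt_9_general n A hA hone x hx
end
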